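/- Let D be a set with |D| = 4 and let m ≥ 1, and write A = (4^{m+1} − 4)/3 and B = 2^{m+1} − 2. Then the number of m-endomorphisms on D⁺, up to combinatorial equivalence, equals (1/24)·( A⁴ + 6·B²·A + 3·A² + 8m·A + 6·A ). -/

import Mathlib

/-!
An `m`-endomorphism of `D⁺` is determined by the images of the letters, i.e. by a map
`f : D → W` into the words of length at most `m`, and combinatorial equivalence is the orbit
relation of `Perm D` acting by `g • f = g ∘ f ∘ g⁻¹`. Burnside's lemma counts the orbits. A map
fixed by `g` is determined by its values on one letter of each cycle of `g`, and the value on a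
letter of a `k`-cycle may be any word fixed by `g ^ k`, that is, any word over the `c` letters fixed
by `g ^ k`; there are `c + c² + ⋯ + cᵐ` of these. Summing over the five conjugacy classes of `S₄`
(of sizes 1, 6, 3, 8, 6) gives `24 · #classes = A⁴ + 6AB² + 3A² + 8mA + 6A`, where `A`, `B` and `m`
are these word counts for `c = 4, 2, 1`.
-/

open Equiv MulAction Finset FreeSemigroup

theorem List.map_eq_self_iff {α : Type*} {f : α → α} {l : List α} :
    l.map f = l ↔ ∀ x ∈ l, f x = x := by
  induction l with
  | nil => simp
  | cons a l ih => simp [ih]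

def wordCount (c m : ℕ) : ℕ := ∑ ℓ ∈ range m, c ^ (ℓ + 1)

theorem wordCount_one (m : ℕ) : wordCount 1 m = m := by simp [wordCount]

theorem cast_wordCount {K : Type*} [Field K] {c : ℕ} (hc : (c : K) ≠ 1) (m : ℕ) :
    (wordCount c m : K) = ((c : K) ^ (m + 1) - c) / (c - 1) := by
  calc (wordCount c m : K) = c * ∑ ℓ ∈ range m, (c : K) ^ ℓ := by
        simp only [wordCount, Nat.cast_sum, Nat.cast_mul, Nat.cast_pow, pow_succ', mul_sum]
    _ = ((c : K) ^ (m + 1) - c) / (c - 1) := by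
        rw [geom_sum_eq hc]
        field_simp
        ring

namespace FreeSemigroup

variable {α β γ : Type*}

theorem map_mk (f : α → β) (a : α) (l : List α) : map f ⟨a, l⟩ = ⟨f a, l.map f⟩ := by
  induction l generalizing a with
  | nil => rfl
  | cons b l ih => exact (map_mul (map f) (of a) ⟨b, l⟩).trans (congrArg (of (f a) * ·) (ih b))

theorem map_comp_map (f : α → β) (g : β → γ) : (map g).comp (map f) = map (g ∘ f) :=
  hom_ext rfl

theorem map_map (f : α → β) (g : β → γ) (w : FreeSemigroup α) :
    map g (map f w) = map (g ∘ f) w :=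
  DFunLike.congr_fun (map_comp_map f g) w

theorem map_id : map (id : α → α) = MulHom.id _ :=
  hom_ext rfl

theorem map_injective {f : α → β} (hf : Function.Injective f) : Function.Injective (map f) := by
  rintro ⟨a, l⟩ ⟨b, l'⟩ h
  rw [map_mk, map_mk, mk.injEq] at h
  rw [hf h.1, List.map_injective_iff.mpr hf h.2]

theorem mk_mem_range_map_val {s : Set α} {a : α} {l : List α} (ha : a ∈ s) (hl : ∀ x ∈ l, x ∈ s) :
    (⟨a, l⟩ : FreeSemigroup α) ∈ Set.range (map ((↑) : s → α)) := by
  obtain ⟨l', rfl⟩ : l ∈ Set.range (List.map ((↑) : s → α)) := by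
    rwa [Set.range_list_map_coe]
  exact ⟨⟨⟨a, ha⟩, l'⟩, map_mk _ _ _⟩

instance : MulAction (Perm α) (FreeSemigroup α) where
  smul g w := map g w
  one_smul w := DFunLike.congr_fun map_id w
  mul_smul g h w := (map_map h g w).symm

theorem perm_smul_def (g : Perm α) (w : FreeSemigroup α) : g • w = map g w := rfl

def lengthLE (α : Type*) (m : ℕ) : SubMulAction (Perm α) (FreeSemigroup α) where
  carrier := {w | w.length ≤ m}
  smul_mem' g w hw := by rwa [Set.mem_ofPred_eq, perm_smul_def, length_map]

theorem mem_lengthLE {m : ℕ} {w : FreeSemigroup α} : w ∈ lengthLE α m ↔ w.length ≤ m := Iff.rfl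

def lengthLEEquivSigma (α : Type*) (m : ℕ) :
    lengthLE α m ≃ Σ ℓ : Fin m, α × List.Vector α ℓ where
  toFun w := ⟨⟨w.1.tail.length, Nat.lt_of_succ_le w.2⟩, w.1.head, ⟨w.1.tail, rfl⟩⟩
  invFun x := ⟨⟨x.2.1, x.2.2.1⟩, by
    rw [mem_lengthLE, length, x.2.2.2]
    exact x.1.2⟩
  left_inv w := rfl
  right_inv := by
    rintro ⟨⟨ℓ, hℓ⟩, a, l, hl⟩
    obtain rfl : l.length = ℓ := hl
    rfl

instance [Finite α] (m : ℕ) : Finite (lengthLE α m) :=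
  Finite.of_equiv _ (lengthLEEquivSigma α m).symm

theorem card_lengthLE [Finite α] (m : ℕ) : Nat.card (lengthLE α m) = wordCount (Nat.card α) m := by
  rw [Nat.card_congr (lengthLEEquivSigma α m), Nat.card_sigma, wordCount,
    ← Fin.sum_univ_eq_sum_range]
  refine Finset.sum_congr rfl fun ℓ _ => ?_
  rw [Nat.card_prod, Nat.card_congr (Equiv.vectorEquivFin α ℓ), Nat.card_fun, Nat.card_fin,
    pow_succ']

noncomputable def fixedByLengthLEEquiv (g : Perm α) (m : ℕ) :
    lengthLE (fixedBy α g) m ≃ fixedBy (lengthLE α m) g :=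
  Equiv.ofBijective
    (fun w => ⟨⟨map (↑) w.1, by rw [mem_lengthLE, length_map]; exact w.2⟩, by
      refine Subtype.ext ?_
      change map g (map _ w.1) = map _ w.1
      rw [map_map]
      exact congrArg (map · w.1) (funext fun x => x.2)⟩)
    ⟨fun w w' h => Subtype.ext (map_injective Subtype.val_injective
        (congrArg Subtype.val (congrArg Subtype.val h))), by
      rintro ⟨⟨⟨a, l⟩, hw⟩, hfix⟩
      have hfix : map g ⟨a, l⟩ = ⟨a, l⟩ := congrArg Subtype.val hfix
      rw [map_mk, mk.injEq, List.map_eq_self_iff] at hfix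
      obtain ⟨w, hw'⟩ := mk_mem_range_map_val (s := fixedBy α g) hfix.1 hfix.2
      refine ⟨⟨w, by rwa [mem_lengthLE, ← length_map, hw']⟩, ?_⟩
      exact Subtype.ext (Subtype.ext hw')⟩

theorem card_fixedBy_lengthLE [Finite α] (g : Perm α) (m : ℕ) :
    Nat.card (fixedBy (lengthLE α m) g) = wordCount (Nat.card (fixedBy α g)) m := by
  rw [← Nat.card_congr (fixedByLengthLEEquiv g m), card_lengthLE]

def lengthLECongr (e : α ≃ β) (m : ℕ) : lengthLE α m ≃ lengthLE β m where
  toFun w := ⟨map e w, by rw [mem_lengthLE, length_map]; exact w.2⟩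
  invFun w := ⟨map e.symm w, by rw [mem_lengthLE, length_map]; exact w.2⟩
  left_inv w := Subtype.ext <| by
    change map e.symm (map e w.1) = w.1
    rw [map_map, e.symm_comp_self, map_id]
    rfl
  right_inv w := Subtype.ext <| by
    change map e (map e.symm w.1) = w.1
    rw [map_map, e.self_comp_symm, map_id]
    rfl

theorem lengthLECongr_smul (e : α ≃ β) (m : ℕ) (g : Perm α) (w : lengthLE α m) :
    lengthLECongr e m (g • w) = e.permCongrHom g • lengthLECongr e m w := by
  refine Subtype.ext ?_
  change map e (map g w.1) = map (e.permCongr g) (map e w.1)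
  rw [map_map, map_map]
  congr 2
  funext a
  simp [permCongr_apply]

end FreeSemigroup

theorem MulAction.period_eq_of_pow_smul_eq {M α : Type*} [Monoid M] [MulAction M α] {m : M} {a : α}
    {n : ℕ} (hn : 0 < n) (fixed : m ^ n • a = a) (moved : ∀ k < n, 0 < k → m ^ k • a ≠ a) :
    period m a = n :=
  le_antisymm (period_le_of_fixed hn fixed)
    (le_period (period_pos_of_fixed hn fixed) fun k hk hkn => moved k hkn hk)

theorem MulAction.card_fixedBy_eq_card_filter {M α : Type*} [Monoid M] [MulAction M α] [Fintype α]
    [DecidableEq α] (m : M) : Nat.card (fixedBy α m) = #{a : α | m • a = a} := by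
  rw [← Fintype.card_subtype, ← Nat.card_eq_fintype_card]
  rfl

theorem MulAction.card_fixedBy_eq_of_isConj {G X : Type*} [Group G] [MulAction G X] {g h : G}
    (hgh : IsConj g h) : Nat.card (fixedBy X g) = Nat.card (fixedBy X h) := by
  obtain ⟨c, rfl⟩ := isConj_iff.mp hgh
  rw [← smul_fixedBy, Set.natCard_smul_set]

theorem MulAction.sum_card_fixedBy_eq_card_orbitRel_quotient_mul_card {G X : Type*} [Group G]
    [MulAction G X] [Fintype G] [Finite X] :
    ∑ g : G, Nat.card (fixedBy X g) = Nat.card (orbitRel.Quotient G X) * Nat.card G := by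
  have := Fintype.ofFinite X
  classical
  simp only [Nat.card_eq_fintype_card]
  convert sum_card_fixedBy_eq_card_orbits_mul_card_group G X

theorem MulAction.card_orbitRel_quotient_congr {G H X Y : Type*} [Group G] [Group H] [MulAction G X]
    [MulAction H Y] (θ : G ≃* H) (e : X ≃ Y) (he : ∀ (g : G) x, e (g • x) = θ g • e x) :
    Nat.card (orbitRel.Quotient G X) = Nat.card (orbitRel.Quotient H Y) :=
  Nat.card_congr <| Quotient.congr e fun a b => by
    rw [orbitRel_apply, orbitRel_apply]
    constructor
    · rintro ⟨g, rfl⟩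
      exact ⟨θ g, (he g b).symm⟩
    · rintro ⟨h, hh⟩
      exact ⟨θ.symm h, e.injective (by rw [← hh, he, MulEquiv.apply_symm_apply])⟩

/-- `α → β` with `G` acting by `(g • f) a = g • f (g⁻¹ • a)` rather than pointwise; its fixed points
are the `g`-equivariant maps. -/
def ConjFun (α β : Type*) := α → β

namespace ConjFun

variable {G H α α' β β' : Type*} [Group G] [Group H] [MulAction G α] [MulAction G β]
  [MulAction H α'] [MulAction H β']

instance : MulAction G (ConjFun α β) where
  smul g f a := g • f (g⁻¹ • a)
  one_smul f := funext fun a => by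
    change (1 : G) • f ((1 : G)⁻¹ • a) = f a
    rw [inv_one, one_smul, one_smul]
  mul_smul g h f := funext fun a => by
    change (g * h) • f ((g * h)⁻¹ • a) = g • h • f (h⁻¹ • g⁻¹ • a)
    rw [mul_inv_rev, mul_smul, mul_smul]

instance [Finite α] [Finite β] : Finite (ConjFun α β) := inferInstanceAs (Finite (α → β))

theorem smul_apply (g : G) (f : ConjFun α β) (a : α) : (g • f) a = g • f (g⁻¹ • a) := rfl

theorem card_fixedBy_one [Finite α] :
    Nat.card (fixedBy (ConjFun α β) (1 : G)) = Nat.card β ^ Nat.card α := by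
  rw [fixedBy_one_eq_univ, Nat.card_univ]
  exact Nat.card_fun

theorem eq_smul_iff {g : G} {f f' : ConjFun α β} : f' = g • f ↔ ∀ a, f' (g • a) = g • f a := by
  refine ⟨fun h a => by rw [h, smul_apply, inv_smul_smul], fun h => funext fun a => ?_⟩
  rw [smul_apply, ← h, smul_inv_smul]

theorem mem_fixedBy_iff {g : G} {f : ConjFun α β} :
    f ∈ fixedBy (ConjFun α β) g ↔ ∀ a, f (g • a) = g • f a := by
  rw [mem_fixedBy, eq_comm, eq_smul_iff]

theorem apply_zpow_smul {g : G} {f : ConjFun α β} (hf : f ∈ fixedBy (ConjFun α β) g) (k : ℤ)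
    (a : α) : f (g ^ k • a) = g ^ k • f a :=
  mem_fixedBy_iff.mp (mem_fixedBy_zpow hf k) a

theorem apply_mem_fixedBy_pow_period {g : G} {f : ConjFun α β} (hf : f ∈ fixedBy (ConjFun α β) g)
    (a : α) : f a ∈ fixedBy β (g ^ period g a) := by
  have := apply_zpow_smul hf (period g a) a
  rwa [zpow_natCast, pow_period_smul, eq_comm] at this

def congr (eα : α ≃ α') (eβ : β ≃ β') : ConjFun α β ≃ ConjFun α' β' :=
  eα.arrowCongr eβ

theorem congr_smul (θ : G →* H) {eα : α ≃ α'} {eβ : β ≃ β'}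
    (hα : ∀ (g : G) a, eα (g • a) = θ g • eα a) (hβ : ∀ (g : G) b, eβ (g • b) = θ g • eβ b)
    (g : G) (f : ConjFun α β) : congr eα eβ (g • f) = θ g • congr eα eβ f := by
  funext a
  have h : eα.symm ((θ g)⁻¹ • a) = g⁻¹ • eα.symm a := by
    rw [Equiv.symm_apply_eq, hα, map_inv, Equiv.apply_symm_apply]
  change eβ (g • f (g⁻¹ • eα.symm a)) = θ g • eβ (f (eα.symm ((θ g)⁻¹ • a)))
  rw [hβ, h]

end ConjFun

section transversal

variable {G α β : Type*} [Group G] [MulAction G α] [MulAction G β]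

theorem zpow_smul_eq_zpow_smul_of_mem_fixedBy {g : G} {a : α} {b : β}
    (hb : b ∈ fixedBy β (g ^ period g a)) {i j : ℤ} (h : g ^ i • a = g ^ j • a) :
    g ^ i • b = g ^ j • b := by
  have hij : g ^ (i - j) • a = a := by
    rw [← smul_left_cancel_iff (g ^ j), smul_smul, ← zpow_add, add_sub_cancel, h]
  obtain ⟨c, hc⟩ := zpow_smul_eq_iff_period_dvd.mp hij
  have hb' : g ^ (i - j) • b = b := by
    rw [hc, zpow_mul, zpow_natCast]
    exact mem_fixedBy_zpow hb c
  calc g ^ i • b = g ^ j • g ^ (i - j) • b := by rw [smul_smul, ← zpow_add, add_sub_cancel]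
    _ = g ^ j • b := by rw [hb']

structure IsZPowersTransversal (g : G) (S : Finset α) : Prop where
  exists_zpow_smul_eq : ∀ a, ∃ s ∈ S, ∃ k : ℤ, g ^ k • s = a
  eq_of_zpow_smul_eq : ∀ s ∈ S, ∀ t ∈ S, ∀ k : ℤ, g ^ k • s = t → s = t

namespace IsZPowersTransversal

variable {g : G} {S : Finset α}

theorem eq_of_zpow_smul_eq_zpow_smul (hS : IsZPowersTransversal g S) {s t : α} (hs : s ∈ S)
    (ht : t ∈ S) {i j : ℤ} (h : g ^ i • s = g ^ j • t) : s = t :=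
  hS.eq_of_zpow_smul_eq s hs t ht (-j + i) <| by
    rw [zpow_add, mul_smul, h, smul_smul, ← zpow_add, neg_add_cancel, zpow_zero, one_smul]

theorem exists_mem_fixedBy_extend (hS : IsZPowersTransversal g S)
    (w : ∀ s : S, fixedBy β (g ^ period g (s : α))) :
    ∃ f ∈ fixedBy (ConjFun α β) g, ∀ s : S, f s = w s := by
  have hcover : ∀ a, ∃ s : S, ∃ k : ℤ, g ^ k • (s : α) = a := fun a =>
    let ⟨s, hs, hk⟩ := hS.exists_zpow_smul_eq a
    ⟨⟨s, hs⟩, hk⟩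
  choose rep k hk using hcover
  have rep_eq {a : α} {s : S} {i : ℤ} (h : g ^ i • (s : α) = a) : rep a = s :=
    Subtype.ext <| hS.eq_of_zpow_smul_eq_zpow_smul (rep a).2 s.2 ((hk a).trans h.symm)
  refine ⟨fun a => g ^ k a • (w (rep a) : β), ConjFun.mem_fixedBy_iff.mpr fun a => ?_, fun s => ?_⟩
  · have hrep : rep (g • a) = rep a :=
      rep_eq (i := 1 + k a) (by rw [zpow_add, zpow_one, mul_smul, hk])
    have h := hk (g • a)
    rw [hrep] at h
    change g ^ k (g • a) • (w (rep (g • a)) : β) = g • g ^ k a • (w (rep a) : β)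
    rw [hrep, smul_smul, ← zpow_one_add]
    exact zpow_smul_eq_zpow_smul_of_mem_fixedBy (w (rep a)).2
      (h.trans (by rw [zpow_one_add, mul_smul, hk]))
  · have hrep : rep s = s := rep_eq (i := 0) (by rw [zpow_zero, one_smul])
    have h := hk s
    rw [hrep] at h
    change g ^ k s • (w (rep s) : β) = w s
    rw [hrep]
    rw [zpow_smul_eq_zpow_smul_of_mem_fixedBy (w s).2 (j := 0) (by rw [h, zpow_zero, one_smul]),
      zpow_zero, one_smul]

theorem card_fixedBy_conjFun (hS : IsZPowersTransversal g S) :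
    Nat.card (fixedBy (ConjFun α β) g) = ∏ s ∈ S, Nat.card (fixedBy β (g ^ period g s)) := by
  rw [← Finset.prod_coe_sort, ← Nat.card_pi]
  refine Nat.card_eq_of_bijective
    (fun f s => ⟨f.1 s, ConjFun.apply_mem_fixedBy_pow_period f.2 s⟩) ⟨?_, ?_⟩
  · rintro ⟨f, hf⟩ ⟨f', hf'⟩ h
    refine Subtype.ext (funext fun a => ?_)
    obtain ⟨s, hs, k, rfl⟩ := hS.exists_zpow_smul_eq a
    have hs := congrArg Subtype.val (congrFun h ⟨s, hs⟩)
    change f (g ^ k • s) = f' (g ^ k • s)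
    rw [ConjFun.apply_zpow_smul hf, ConjFun.apply_zpow_smul hf']
    exact congrArg _ hs
  · intro w
    obtain ⟨f, hf, hfw⟩ := hS.exists_mem_fixedBy_extend w
    exact ⟨⟨f, hf⟩, funext fun s => Subtype.ext (hfw s)⟩

end IsZPowersTransversal

end transversal

theorem Equiv.Perm.isZPowersTransversal {α : Type*} {σ : Perm α} {S : Finset α}
    (hcover : ∀ a, ∃ s ∈ S, σ.SameCycle s a) (hsep : ∀ s ∈ S, ∀ t ∈ S, σ.SameCycle s t → s = t) :
    IsZPowersTransversal σ S :=
  ⟨hcover, fun s hs t ht k hk => hsep s hs t ht ⟨k, hk⟩⟩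

theorem Equiv.Perm.sum_fin_four_of_isConj {M : Type*} [AddCommMonoid M] (φ : Perm (Fin 4) → M)
    (hφ : ∀ g h, IsConj g h → φ g = φ h) :
    ∑ g, φ g = φ 1 + 6 • φ (swap 0 1) + 3 • φ (swap 0 1 * swap 2 3)
      + 8 • φ (swap 0 1 * swap 1 2) + 6 • φ (swap 0 1 * swap 1 2 * swap 2 3) := by
  let R : Finset (Perm (Fin 4)) :=
    {1, swap 0 1, swap 0 1 * swap 2 3, swap 0 1 * swap 1 2, swap 0 1 * swap 1 2 * swap 2 3}
  have hR : ∀ g ∈ (univ : Finset (Perm (Fin 4))), g.cycleType ∈ R.image cycleType := by decide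
  have fiber (r : Perm (Fin 4)) : ∑ g ∈ univ with g.cycleType = r.cycleType, φ g
      = #{g : Perm (Fin 4) | g.cycleType = r.cycleType} • φ r := by
    rw [← sum_const]
    exact sum_congr rfl fun g hg => hφ g r (isConj_iff_cycleType_eq.mpr (mem_filter.mp hg).2)
  rw [← sum_fiberwise_of_maps_to hR, sum_image (by decide)]
  simp only [fiber]
  rw [sum_insert (by decide), sum_insert (by decide), sum_insert (by decide), sum_pair (by decide),
    show #{g : Perm (Fin 4) | g.cycleType = cycleType 1} = 1 by decide,
    show #{g : Perm (Fin 4) | g.cycleType = (swap 0 1 : Perm (Fin 4)).cycleType} = 6 by decide,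
    show #{g : Perm (Fin 4) | g.cycleType = (swap 0 1 * swap 2 3 : Perm (Fin 4)).cycleType} = 3 by
      decide,
    show #{g : Perm (Fin 4) | g.cycleType = (swap 0 1 * swap 1 2 : Perm (Fin 4)).cycleType} = 8 by
      decide,
    show #{g : Perm (Fin 4) |
      g.cycleType = (swap 0 1 * swap 1 2 * swap 2 3 : Perm (Fin 4)).cycleType} = 6 by decide,
    one_smul]
  abel

namespace ConjFun

variable (m : ℕ)

theorem card_fixedBy_fin_four_swap :
    Nat.card (fixedBy (ConjFun (Fin 4) (lengthLE (Fin 4) m)) (swap 0 1 : Perm (Fin 4)))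
      = wordCount 4 m * wordCount 2 m ^ 2 := by
  rw [(Perm.isZPowersTransversal (S := {0, 2, 3}) (by decide) (by decide)).card_fixedBy_conjFun,
    prod_insert (by decide), prod_pair (by decide),
    period_eq_of_pow_smul_eq (n := 2) (by decide) (by decide) (by decide),
    period_eq_one_iff.mpr (by decide), period_eq_one_iff.mpr (by decide)]
  simp only [card_fixedBy_lengthLE, card_fixedBy_eq_card_filter]
  rw [show #{a : Fin 4 | (swap 0 1 : Perm (Fin 4)) ^ 2 • a = a} = 4 by decide,
    show #{a : Fin 4 | (swap 0 1 : Perm (Fin 4)) ^ 1 • a = a} = 2 by decide, sq]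

theorem card_fixedBy_fin_four_swap_mul_swap :
    Nat.card (fixedBy (ConjFun (Fin 4) (lengthLE (Fin 4) m)) (swap 0 1 * swap 2 3 : Perm (Fin 4)))
      = wordCount 4 m ^ 2 := by
  rw [(Perm.isZPowersTransversal (S := {0, 2}) (by decide) (by decide)).card_fixedBy_conjFun,
    prod_pair (by decide),
    period_eq_of_pow_smul_eq (n := 2) (by decide) (by decide) (by decide),
    period_eq_of_pow_smul_eq (n := 2) (by decide) (by decide) (by decide)]
  simp only [card_fixedBy_lengthLE, card_fixedBy_eq_card_filter]
  rw [show #{a : Fin 4 | (swap 0 1 * swap 2 3 : Perm (Fin 4)) ^ 2 • a = a} = 4 by decide, sq]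

theorem card_fixedBy_fin_four_threeCycle :
    Nat.card (fixedBy (ConjFun (Fin 4) (lengthLE (Fin 4) m)) (swap 0 1 * swap 1 2 : Perm (Fin 4)))
      = wordCount 4 m * wordCount 1 m := by
  rw [(Perm.isZPowersTransversal (S := {0, 3}) (by decide) (by decide)).card_fixedBy_conjFun,
    prod_pair (by decide),
    period_eq_of_pow_smul_eq (n := 3) (by decide) (by decide) (by decide),
    period_eq_one_iff.mpr (by decide)]
  simp only [card_fixedBy_lengthLE, card_fixedBy_eq_card_filter]
  rw [show #{a : Fin 4 | (swap 0 1 * swap 1 2 : Perm (Fin 4)) ^ 3 • a = a} = 4 by decide,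
    show #{a : Fin 4 | (swap 0 1 * swap 1 2 : Perm (Fin 4)) ^ 1 • a = a} = 1 by decide]

theorem card_fixedBy_fin_four_fourCycle :
    Nat.card (fixedBy (ConjFun (Fin 4) (lengthLE (Fin 4) m))
      (swap 0 1 * swap 1 2 * swap 2 3 : Perm (Fin 4))) = wordCount 4 m := by
  rw [(Perm.isZPowersTransversal (S := {0}) (by decide) (by decide)).card_fixedBy_conjFun,
    prod_singleton, period_eq_of_pow_smul_eq (n := 4) (by decide) (by decide) (by decide),
    card_fixedBy_lengthLE, card_fixedBy_eq_card_filter]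
  rw [show #{a : Fin 4 | (swap 0 1 * swap 1 2 * swap 2 3 : Perm (Fin 4)) ^ 4 • a = a} = 4 by decide]

end ConjFun

theorem card_orbitRel_quotient_conjFun_congr {α β : Type*} (e : α ≃ β) (m : ℕ) :
    Nat.card (orbitRel.Quotient (Perm α) (ConjFun α (lengthLE α m)))
      = Nat.card (orbitRel.Quotient (Perm β) (ConjFun β (lengthLE β m))) :=
  card_orbitRel_quotient_congr e.permCongrHom (ConjFun.congr e (lengthLECongr e m))
    (ConjFun.congr_smul e.permCongrHom.toMonoidHom
      (fun g a => by simp [permCongrHom]) (lengthLECongr_smul e m))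

theorem card_orbitRel_quotient_conjFun_fin_four (m : ℕ) :
    24 * Nat.card (orbitRel.Quotient (Perm (Fin 4)) (ConjFun (Fin 4) (lengthLE (Fin 4) m)))
      = wordCount 4 m ^ 4 + 6 * (wordCount 4 m * wordCount 2 m ^ 2) + 3 * wordCount 4 m ^ 2
        + 8 * (wordCount 4 m * wordCount 1 m) + 6 * wordCount 4 m := by
  have h24 : Nat.card (Perm (Fin 4)) = 24 := by rw [Nat.card_perm, Nat.card_fin]; rfl
  rw [mul_comm, ← h24, ← sum_card_fixedBy_eq_card_orbitRel_quotient_mul_card,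
    Perm.sum_fin_four_of_isConj _ fun g h => card_fixedBy_eq_of_isConj, ConjFun.card_fixedBy_one,
    card_lengthLE, Nat.card_fin, ConjFun.card_fixedBy_fin_four_swap,
    ConjFun.card_fixedBy_fin_four_swap_mul_swap, ConjFun.card_fixedBy_fin_four_threeCycle,
    ConjFun.card_fixedBy_fin_four_fourCycle]
  simp only [smul_eq_mul]

abbrev MEndomorphism (α : Type*) (m : ℕ) :=
  {φ : FreeSemigroup α →ₙ* FreeSemigroup α // ∀ a : α, (φ (of a)).length ≤ m}

namespace MEndomorphism

variable {α : Type*} {m : ℕ}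

def CombinatoriallyEquivalent (φ ψ : MEndomorphism α m) : Prop :=
  ∃ g : Perm α, (ψ : FreeSemigroup α →ₙ* FreeSemigroup α).comp (map g)
    = (map g).comp (φ : FreeSemigroup α →ₙ* FreeSemigroup α)

def equivConjFun (α : Type*) (m : ℕ) : MEndomorphism α m ≃ ConjFun α (lengthLE α m) where
  toFun φ a := ⟨φ.1 (of a), φ.2 a⟩
  invFun f := ⟨lift fun a => (f a).1, fun a => (f a).2⟩
  left_inv _ := Subtype.ext (hom_ext rfl)
  right_inv _ := rfl

theorem comp_map_eq_map_comp_iff {φ ψ : MEndomorphism α m} {g : Perm α} :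
    (ψ : FreeSemigroup α →ₙ* FreeSemigroup α).comp (map g)
        = (map g).comp (φ : FreeSemigroup α →ₙ* FreeSemigroup α)
      ↔ equivConjFun α m ψ = g • equivConjFun α m φ := by
  rw [ConjFun.eq_smul_iff]
  exact ⟨fun h a => Subtype.ext (DFunLike.congr_fun h (of a)),
    fun h => hom_ext (funext fun a => congrArg Subtype.val (h a))⟩

def quotEquivOrbitRelQuotient (α : Type*) (m : ℕ) :
    Quot (CombinatoriallyEquivalent (α := α) (m := m))
      ≃ orbitRel.Quotient (Perm α) (ConjFun α (lengthLE α m)) :=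
  Quot.congr (equivConjFun α m) fun φ ψ => by
    rw [CombinatoriallyEquivalent, orbitRel_apply, mem_orbit_iff]
    simp only [comp_map_eq_map_comp_iff, ← inv_smul_eq_iff]
    exact ⟨fun ⟨g, h⟩ => ⟨g⁻¹, h⟩, fun ⟨g, h⟩ => ⟨g⁻¹, by rwa [inv_inv]⟩⟩

end MEndomorphism

theorem number_of_classes_of_m_endomorphisms_card_four_general
    {D : Type*} [Fintype D] {m : ℕ} (hcard : Fintype.card D = 4) :
    (Nat.card (Quot (fun φ ψ : {φ : FreeSemigroup D →ₙ* FreeSemigroup D //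
          ∀ d : D, (φ (FreeSemigroup.of d)).length ≤ m} =>
        ∃ g : Equiv.Perm D,
          (ψ : FreeSemigroup D →ₙ* FreeSemigroup D).comp (FreeSemigroup.map ⇑g)
            = (FreeSemigroup.map ⇑g).comp
                (φ : FreeSemigroup D →ₙ* FreeSemigroup D))) : ℚ)
      = (1 / 24) * ((((4 : ℚ) ^ (m + 1) - 4) / 3) ^ 4
          + 6 * ((2 : ℚ) ^ (m + 1) - 2) ^ 2 * (((4 : ℚ) ^ (m + 1) - 4) / 3)
          + 3 * (((4 : ℚ) ^ (m + 1) - 4) / 3) ^ 2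
          + 8 * m * (((4 : ℚ) ^ (m + 1) - 4) / 3)
          + 6 * (((4 : ℚ) ^ (m + 1) - 4) / 3)) := by
  change (Nat.card (Quot (MEndomorphism.CombinatoriallyEquivalent (α := D) (m := m))) : ℚ) = _
  obtain ⟨e⟩ : Nonempty (D ≃ Fin 4) := ⟨Fintype.equivFinOfCardEq hcard⟩
  have hcount := congrArg (Nat.cast : ℕ → ℚ) (card_orbitRel_quotient_conjFun_fin_four m)
  push_cast at hcount
  rw [cast_wordCount (by norm_num), cast_wordCount (by norm_num), wordCount_one] at hcount
  rw [Nat.card_congr (MEndomorphism.quotEquivOrbitRelQuotient D m),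
    card_orbitRel_quotient_conjFun_congr e m]
  linear_combination hcount / 24

/-- If `|D| = 4` and `m ≥ 1`, then with `A = (4^{m+1}−4)/3` and `B = 2^{m+1}−2`, the number of
`m`-endomorphisms on the free semigroup `D⁺`, up to combinatorial equivalence, is
`(1/24)·(A⁴ + 6·B²·A + 3·A² + 8m·A + 6·A)`. -/
theorem number_of_classes_of_m_endomorphisms_card_four
    {D : Type*} [Fintype D] {m : ℕ} (hm : 1 ≤ m) (hcard : Fintype.card D = 4) :
    (Nat.card (Quot (fun φ ψ : {φ : FreeSemigroup D →ₙ* FreeSemigroup D //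
          ∀ d : D, (φ (FreeSemigroup.of d)).length ≤ m} =>
        ∃ g : Equiv.Perm D,
          (ψ : FreeSemigroup D →ₙ* FreeSemigroup D).comp (FreeSemigroup.map ⇑g)
            = (FreeSemigroup.map ⇑g).comp
                (φ : FreeSemigroup D →ₙ* FreeSemigroup D))) : ℚ)
      = (1 / 24) * ((((4 : ℚ) ^ (m + 1) - 4) / 3) ^ 4
          + 6 * ((2 : ℚ) ^ (m + 1) - 2) ^ 2 * (((4 : ℚ) ^ (m + 1) - 4) / 3)
          + 3 * (((4 : ℚ) ^ (m + 1) - 4) / 3) ^ 2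
          + 8 * m * (((4 : ℚ) ^ (m + 1) - 4) / 3)
          + 6 * (((4 : ℚ) ^ (m + 1) - 4) / 3)) :=
  number_of_classes_of_m_endomorphisms_card_four_general hcard
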